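/- arXiv:2010.15404 — 3 statements merged into one kernel-verified Lean document; each statement's English description precedes it below -/
import Mathlib

section
/- If m ≥ 3, then the task quality function q is non-decreasing: for all finite sets S ⊆ T ⊆ {1,…,m}, q(S) ≤ q(T). -/
/-- Temporal distance between slots `j` and `e`. -/
def tdist (j e : ℕ) : ℕ := ((j : ℤ) - (e : ℤ)).natAbs

/-- Padded `k`-NN distance sum `I_k^S(j)`. -/
def Ik (m k : ℕ) (S : Finset ℕ) (j : ℕ) : ℕ :=
  if k ≤ S.card then
    (((S.val.map (fun e => tdist j e)).sort (· ≤ ·)).take k).sum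
  else
    (S.val.map (fun e => tdist j e)).sum + (k - S.card) * m

/-- Interpolation error ratio `ρ^S(j)`. -/
noncomputable def rho (m k : ℕ) (S : Finset ℕ) (j : ℕ) : ℝ :=
  if j ∈ S then 0 else (Ik m k S j : ℝ) / ((k : ℝ) * (m : ℝ))

/-- Subtask finishing probability `p^S(j)`. -/
noncomputable def prob (m k : ℕ) (S : Finset ℕ) (j : ℕ) : ℝ :=
  (1 / (m : ℝ)) * (1 - rho m k S j)

/-- Task quality `q(S)` (note `Real.logb 2 0 = 0`, so the convention
`0 · log₂ 0 = 0` holds definitionally). -/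
noncomputable def quality (m k : ℕ) (S : Finset ℕ) : ℝ :=
  ∑ j ∈ Finset.Icc 1 m, -(prob m k S j * Real.logb 2 (prob m k S j))

/-!
Adding executed slots can only shrink each padded k-NN distance sum: inserting a value `≤ m`
into a multiset lowers the sum of its `k` smallest entries padded by `m`. Hence every `p^S(j)`
increases with `S`. All these probabilities lie in `[0, 1/m] ⊆ [0, 1/3] ⊆ [0, 1/e]`, where
`x ↦ -x log x` is increasing, so `q` increases term by term.
-/

open Real

lemma Multiset.sort_cons_eq_orderedInsert {α : Type*} [LinearOrder α] (a : α) (s : Multiset α) :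
    (a ::ₘ s).sort (· ≤ ·) = (s.sort (· ≤ ·)).orderedInsert (· ≤ ·) a :=
  Quot.inductionOn s fun l => by simp [List.mergeSort_eq_insertionSort]

section SmallestSum

variable {α : Type*} [LinearOrder α] [AddCommMonoid α] [IsOrderedAddMonoid α]

lemma sum_take_cons_le_of_forall_le {a : α} {l : List α} {k : ℕ} (ha : ∀ x ∈ l, a ≤ x)
    (hk : k ≤ l.length) : ((a :: l).take k).sum ≤ (l.take k).sum := by
  cases k with
  | zero => simp
  | succ n =>
    have hn : n < l.length := hk
    rw [List.take_succ_cons, List.sum_cons, List.take_add_one, List.getElem?_eq_getElem hn,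
      List.sum_append, add_comm]
    simpa using add_le_add_right (ha _ (List.getElem_mem hn)) _

lemma sum_take_orderedInsert_le (a : α) {l : List α} {k : ℕ} (hl : l.Pairwise (· ≤ ·))
    (hk : k ≤ l.length) : ((l.orderedInsert (· ≤ ·) a).take k).sum ≤ (l.take k).sum := by
  induction l generalizing k with
  | nil => simp_all
  | cons b t ih =>
    obtain ⟨hb, ht⟩ := List.pairwise_cons.mp hl
    by_cases hab : a ≤ b
    · rw [List.orderedInsert_cons_of_le _ _ hab]
      refine sum_take_cons_le_of_forall_le (fun x hx => ?_) hk
      rcases List.mem_cons.mp hx with rfl | hx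
      exacts [hab, hab.trans (hb x hx)]
    · rw [List.orderedInsert_cons, if_neg hab]
      cases k with
      | zero => simp
      | succ n =>
        simp only [List.take_succ_cons, List.sum_cons]
        exact add_le_add_right (ih ht (by simpa using hk)) b

end SmallestSum

open Multiset in
def paddedSmallestSum (m k : ℕ) (M : Multiset ℕ) : ℕ :=
  if k ≤ card M then ((M.sort (· ≤ ·)).take k).sum else M.sum + (k - card M) * m

namespace paddedSmallestSum

open Multiset

variable {m k : ℕ}

lemma of_card_le {M : Multiset ℕ} (h : card M ≤ k) :
    paddedSmallestSum m k M = M.sum + (k - card M) * m := by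
  unfold paddedSmallestSum
  split_ifs with hk
  · rw [List.take_of_length_le (by simpa using h), ← Multiset.sum_coe, Multiset.sort_eq,
      Nat.sub_eq_zero_of_le hk, zero_mul, add_zero]
  · rfl

lemma zero : paddedSmallestSum m k 0 = k * m := by
  simp [of_card_le (M := 0) (Nat.zero_le k)]

lemma cons_le {a : ℕ} (ha : a ≤ m) (M : Multiset ℕ) :
    paddedSmallestSum m k (a ::ₘ M) ≤ paddedSmallestSum m k M := by
  rcases le_or_gt k (card M) with hk | hk
  · have hk' : k ≤ card (a ::ₘ M) := hk.trans (card_le_card (le_cons_self M a))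
    simp only [paddedSmallestSum, if_pos hk, if_pos hk', sort_cons_eq_orderedInsert]
    exact sum_take_orderedInsert_le a (pairwise_sort M _) (by simpa using hk)
  · rw [of_card_le hk.le, of_card_le (by simpa using hk), sum_cons, card_cons]
    obtain ⟨c, hc⟩ := Nat.exists_eq_add_of_lt hk
    rw [hc]
    simp only [show card M + c + 1 - card M = c + 1 by omega,
      show card M + c + 1 - (card M + 1) = c by omega, add_mul, one_mul]
    omega

lemma antitone {M N : Multiset ℕ} (hNM : N ≤ M) (hM : ∀ x ∈ M, x ≤ m) :
    paddedSmallestSum m k M ≤ paddedSmallestSum m k N := by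
  obtain ⟨u, rfl⟩ := Multiset.le_iff_exists_add.mp hNM
  induction u using Multiset.induction with
  | empty => simp
  | cons a u ih =>
    rw [add_cons] at hM ⊢
    exact (cons_le (hM a (mem_cons_self a _)) _).trans
      (ih (le_add_right _ _) fun x hx => hM x (mem_cons_of_mem hx))

lemma le_mul {M : Multiset ℕ} (hM : ∀ x ∈ M, x ≤ m) : paddedSmallestSum m k M ≤ k * m :=
  (antitone (zero_le M) hM).trans_eq zero

end paddedSmallestSum

lemma tdist_le_of_mem_Icc {m j e : ℕ} (hj : j ∈ Finset.Icc 1 m) (he : e ∈ Finset.Icc 1 m) :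
    tdist j e ≤ m := by
  simp only [Finset.mem_Icc] at hj he
  unfold tdist
  omega

section Slots

variable {m k j : ℕ} {S T : Finset ℕ}

lemma Ik_eq_paddedSmallestSum :
    Ik m k S j = paddedSmallestSum m k (S.val.map (tdist j)) := by
  simp [Ik, paddedSmallestSum]

lemma Ik_antitone (hj : j ∈ Finset.Icc 1 m) (hT : T ⊆ Finset.Icc 1 m) (hST : S ⊆ T) :
    Ik m k T j ≤ Ik m k S j := by
  simp only [Ik_eq_paddedSmallestSum]
  refine paddedSmallestSum.antitone (Multiset.map_le_map (Finset.val_le_iff.mpr hST)) ?_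
  simp only [Multiset.mem_map, forall_exists_index, and_imp, forall_apply_eq_imp_iff₂]
  exact fun e he => tdist_le_of_mem_Icc hj (hT he)

lemma Ik_le_mul (hj : j ∈ Finset.Icc 1 m) (hS : S ⊆ Finset.Icc 1 m) : Ik m k S j ≤ k * m := by
  simpa [Ik_eq_paddedSmallestSum, paddedSmallestSum.zero] using
    Ik_antitone (k := k) hj hS (Finset.empty_subset S)

lemma rho_nonneg : 0 ≤ rho m k S j := by
  unfold rho
  positivity

lemma rho_le_one (hj : j ∈ Finset.Icc 1 m) (hS : S ⊆ Finset.Icc 1 m) : rho m k S j ≤ 1 := by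
  unfold rho
  split_ifs
  · exact zero_le_one
  · exact div_le_one_of_le₀ (by exact_mod_cast Ik_le_mul hj hS) (by positivity)

lemma rho_antitone (hj : j ∈ Finset.Icc 1 m) (hT : T ⊆ Finset.Icc 1 m) (hST : S ⊆ T) :
    rho m k T j ≤ rho m k S j := by
  unfold rho
  by_cases hjT : j ∈ T
  · rw [if_pos hjT]
    exact rho_nonneg
  · rw [if_neg hjT, if_neg fun hjS => hjT (hST hjS)]
    gcongr
    exact Ik_antitone hj hT hST

lemma prob_nonneg (hj : j ∈ Finset.Icc 1 m) (hS : S ⊆ Finset.Icc 1 m) : 0 ≤ prob m k S j :=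
  mul_nonneg (by positivity) (sub_nonneg.mpr (rho_le_one hj hS))

lemma prob_le_one_div : prob m k S j ≤ 1 / m :=
  mul_le_of_le_one_right (by positivity) (sub_le_self _ rho_nonneg)

lemma prob_monotone (hj : j ∈ Finset.Icc 1 m) (hT : T ⊆ Finset.Icc 1 m) (hST : S ⊆ T) :
    prob m k S j ≤ prob m k T j := by
  unfold prob
  gcongr
  exact rho_antitone hj hT hST

end Slots

lemma Real.monotoneOn_negMulLog : MonotoneOn negMulLog (Set.Icc 0 (exp (-1))) := by
  refine monotoneOn_of_deriv_nonneg (convex_Icc _ _) continuous_negMulLog.continuousOn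
    (fun x hx => ?_) fun x hx => ?_
  all_goals rw [interior_Icc] at hx
  · exact (differentiableAt_negMulLog hx.1.ne').differentiableWithinAt
  · rw [deriv_negMulLog hx.1.ne', sub_nonneg, le_neg, ← log_exp (-1)]
    exact log_le_log hx.1 hx.2.le

lemma neg_mul_logb (b x : ℝ) : -(x * logb b x) = negMulLog x / log b := by
  rw [logb, negMulLog]
  ring

theorem quality_nondecreasing_general (m k : ℕ) (hm : 3 ≤ m)
    (S T : Finset ℕ) (hT : T ⊆ Finset.Icc 1 m) (hST : S ⊆ T) :
    quality m k S ≤ quality m k T := by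
  refine Finset.sum_le_sum fun j hj => ?_
  have hp_small : prob m k T j ≤ exp (-1) :=
    calc prob m k T j ≤ 1 / m := prob_le_one_div
      _ ≤ 1 / 3 := by gcongr; exact_mod_cast hm
      _ ≤ exp (-1) := by
        rw [exp_neg, one_div]
        exact inv_anti₀ (exp_pos 1) exp_one_lt_three.le
  have hp_nonneg := prob_nonneg (k := k) hj (hST.trans hT)
  have hp_mono := prob_monotone (k := k) hj hT hST
  rw [neg_mul_logb, neg_mul_logb]
  gcongr
  exact monotoneOn_negMulLog ⟨hp_nonneg, hp_mono.trans hp_small⟩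
    ⟨hp_nonneg.trans hp_mono, hp_small⟩ hp_mono

/-- If `m ≥ 3`, the task quality is non-decreasing. -/
theorem quality_nondecreasing (m k : ℕ) (hm : 3 ≤ m) (hk : 1 ≤ k)
    (S T : Finset ℕ) (hT : T ⊆ Finset.Icc 1 m) (hST : S ⊆ T) :
    quality m k S ≤ quality m k T :=
  quality_nondecreasing_general m k hm S T hT hST
end

section
/- For every slot j ∈ {1,…,m}, the set function S ↦ p^S(j) is submodular: for all finite sets X, Y ⊆ {1,…,m}, p^{X ∩ Y}(j) + p^{X ∪ Y}(j) ≤ p^X(j) + p^Y(j). -/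
/-!
Since all distances are at most `m`, the padded `k`-NN sum `I_k^S(j)` is the sum of the `k`
smallest elements of the multiset of distances from `j` to `S` padded by `k` copies of `m`.
Adding an element `x` to a multiset with at least `k` elements replaces its `k`-th smallest
element `a` by `min x a` in that sum; since `a` can only decrease as the multiset grows, the gain
from adding `x` is smaller for larger multisets, i.e. the sum of the `k` smallest elements is
supermodular. Hence so is `ρ^S(j)` (when `j` lies in one of the sets, monotonicity suffices),
and `p^S(j)`, a decreasing affine function of `ρ^S(j)`, is submodular.
-/

namespace List

variable {α : Type*} [LinearOrder α] {l : List α}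

theorem Pairwise.getD_le_getD (hl : l.Pairwise (· ≤ ·)) (d : α) {i j : ℕ} (hij : i ≤ j)
    (hj : j < l.length) : l.getD i d ≤ l.getD j d := by
  rw [getD_eq_getElem _ _ (hij.trans_lt hj), getD_eq_getElem _ _ hj]
  rcases hij.eq_or_lt with rfl | hlt
  · rfl
  · exact pairwise_iff_getElem.mp hl i j _ hj hlt

theorem getD_orderedInsert_le (hl : l.Pairwise (· ≤ ·)) (x d : α) {n : ℕ}
    (hn : n < l.length) : (l.orderedInsert (· ≤ ·) x).getD n d ≤ l.getD n d := by
  induction l generalizing n with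
  | nil => simp at hn
  | cons a l ih =>
    rw [orderedInsert_cons]
    split_ifs with hxa
    · cases n with
      | zero => simpa using hxa
      | succ n => simpa using hl.getD_le_getD d n.le_succ hn
    · cases n with
      | zero => simp
      | succ n => simpa using ih hl.of_cons (by simpa using hn)

theorem sum_take_succ_orderedInsert [AddCommMonoid α] (hl : l.Pairwise (· ≤ ·)) (x d : α)
    {n : ℕ} (hn : n < l.length) :
    ((l.orderedInsert (· ≤ ·) x).take (n + 1)).sum = (l.take n).sum + min x (l.getD n d) := by
  induction l generalizing n with
  | nil => simp at hn
  | cons a l ih =>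
    rw [orderedInsert_cons]
    split_ifs with hxa
    · have hx : x ≤ (a :: l).getD n d := hxa.trans (hl.getD_le_getD d n.zero_le hn)
      rw [take_succ_cons, sum_cons, min_eq_left hx, add_comm]
    · cases n with
      | zero => simp [min_eq_right (le_of_not_ge hxa)]
      | succ n =>
        rw [take_succ_cons, sum_cons, ih hl.of_cons (by simpa using hn), take_succ_cons, sum_cons,
          getD_cons_succ, add_assoc]

end List

namespace Multiset

section LinearOrder

variable {α : Type*} [LinearOrder α]

theorem sort_cons_eq_orderedInsert_s3 (x : α) (s : Multiset α) :
    (x ::ₘ s).sort = s.sort.orderedInsert (· ≤ ·) x := by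
  refine List.Perm.eq_of_pairwise' (pairwise_sort _ _) ((pairwise_sort _ _).orderedInsert _ _) ?_
  refine List.Perm.trans ?_ (List.perm_orderedInsert _ x _).symm
  rw [← coe_eq_coe, sort_eq, ← cons_coe, sort_eq]

theorem sort_add_replicate {s : Multiset α} {b : α} (hs : ∀ a ∈ s, a ≤ b) (n : ℕ) :
    (s + replicate n b).sort = s.sort ++ List.replicate n b := by
  refine List.Perm.eq_of_pairwise' (pairwise_sort _ _) ?_ ?_
  · refine List.pairwise_append.mpr
      ⟨pairwise_sort _ _, List.pairwise_replicate.mpr (.inr le_rfl), fun a ha c hc => ?_⟩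
    rw [List.eq_of_mem_replicate hc]
    exact hs a ((mem_sort _).mp ha)
  · rw [← coe_eq_coe, sort_eq, ← coe_add, sort_eq, coe_replicate]

end LinearOrder

section Smallest

variable {α : Type*} [AddCommMonoid α] [LinearOrder α] {s t : Multiset α} {k n : ℕ}

def sumSmallest (s : Multiset α) (k : ℕ) : α := (s.sort.take k).sum

def nthSmallest (s : Multiset α) (n : ℕ) : α := s.sort.getD n 0

@[simp]
theorem sumSmallest_zero (s : Multiset α) : s.sumSmallest 0 = 0 := by
  simp [sumSmallest]

theorem sumSmallest_succ (hn : n < card s) :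
    s.sumSmallest (n + 1) = s.sumSmallest n + s.nthSmallest n := by
  have hn' : n < s.sort.length := by rwa [length_sort]
  rw [sumSmallest, List.sum_take_succ _ _ hn', nthSmallest, List.getD_eq_getElem _ _ hn']
  rfl

theorem sumSmallest_succ_cons (x : α) (hn : n < card s) :
    (x ::ₘ s).sumSmallest (n + 1) = s.sumSmallest n + min x (s.nthSmallest n) := by
  rw [sumSmallest, sort_cons_eq_orderedInsert_s3]
  exact List.sum_take_succ_orderedInsert (pairwise_sort _ _) x 0 (by rwa [length_sort])

theorem nthSmallest_cons_le (x : α) (hn : n < card s) :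
    (x ::ₘ s).nthSmallest n ≤ s.nthSmallest n := by
  rw [nthSmallest, sort_cons_eq_orderedInsert_s3]
  exact List.getD_orderedInsert_le (pairwise_sort _ _) x 0 (by rwa [length_sort])

theorem nthSmallest_le_of_le (hst : s ≤ t) (hn : n < card s) :
    t.nthSmallest n ≤ s.nthSmallest n := by
  obtain ⟨d, rfl⟩ := le_iff_exists_add.mp hst
  clear hst
  induction d using Multiset.induction_on with
  | empty => simp
  | cons x d ih =>
    rw [add_cons]
    exact (nthSmallest_cons_le x (hn.trans_le (by simp))).trans ih

variable [IsOrderedCancelAddMonoid α]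

theorem sumSmallest_cons_le (x : α) (hk : k ≤ card s) :
    (x ::ₘ s).sumSmallest k ≤ s.sumSmallest k := by
  cases k with
  | zero => simp
  | succ n =>
    rw [sumSmallest_succ_cons x hk, sumSmallest_succ hk]
    exact add_le_add_right (min_le_right x _) _

theorem sumSmallest_le_of_le (hst : s ≤ t) (hk : k ≤ card s) :
    t.sumSmallest k ≤ s.sumSmallest k := by
  obtain ⟨d, rfl⟩ := le_iff_exists_add.mp hst
  clear hst
  induction d using Multiset.induction_on with
  | empty => simp
  | cons x d ih =>
    rw [add_cons]
    exact (sumSmallest_cons_le x (hk.trans (by simp))).trans ih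

theorem sumSmallest_add_sumSmallest_cons_le (hst : s ≤ t) (hk : k ≤ card s) (x : α) :
    t.sumSmallest k + (x ::ₘ s).sumSmallest k ≤
      s.sumSmallest k + (x ::ₘ t).sumSmallest k := by
  cases k with
  | zero => simp
  | succ n =>
    have hnt : n < card t := hk.trans (card_le_card hst)
    rw [sumSmallest_succ hnt, sumSmallest_succ_cons x hk, sumSmallest_succ hk,
      sumSmallest_succ_cons x hnt]
    have key : t.nthSmallest n + min x (s.nthSmallest n) ≤
        s.nthSmallest n + min x (t.nthSmallest n) := by
      rw [← min_add_add_left, ← min_add_add_left, add_comm (t.nthSmallest n) (s.nthSmallest n)]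
      exact min_le_min_right _ (add_le_add_left (nthSmallest_le_of_le hst hk) x)
    convert add_le_add_right key (t.sumSmallest n + s.sumSmallest n) using 1 <;> abel

theorem sumSmallest_add_sumSmallest_add_le (hst : s ≤ t) (hk : k ≤ card s) (d : Multiset α) :
    t.sumSmallest k + (s + d).sumSmallest k ≤ s.sumSmallest k + (t + d).sumSmallest k := by
  induction d using Multiset.induction_on with
  | empty => simp [add_comm]
  | cons x d ih =>
    rw [add_cons, add_cons]
    have step := sumSmallest_add_sumSmallest_cons_le (add_le_add_left hst d)
      (hk.trans (card_le_card (le_add_right s d))) x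
    refine le_of_add_le_add_right (a := (s + d).sumSmallest k + (t + d).sumSmallest k) ?_
    convert add_le_add ih step using 1 <;> abel

end Smallest

end Multiset

def dists (j : ℕ) (S : Finset ℕ) : Multiset ℕ := S.val.map (tdist j)

section Slots

variable {m k j : ℕ} {S T X Y : Finset ℕ}

theorem tdist_le_of_le {e : ℕ} (hj : j ≤ m) (he : e ≤ m) : tdist j e ≤ m := by
  unfold tdist
  omega

theorem dists_mono (hST : S ⊆ T) : dists j S ≤ dists j T :=
  Multiset.map_le_map (Finset.val_le_iff.mpr hST)

theorem dists_union_of_disjoint (h : Disjoint S T) : dists j (S ∪ T) = dists j S + dists j T := by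
  rw [dists, ← Finset.disjUnion_eq_union S T h, Finset.disjUnion_val, Multiset.map_add]
  rfl

theorem Ik_eq_sumSmallest (h : ∀ e ∈ S, tdist j e ≤ m) :
    Ik m k S j = (dists j S + Multiset.replicate k m).sumSmallest k := by
  have hle : ∀ a ∈ dists j S, a ≤ m := by simpa [dists] using h
  have hlen : (dists j S).sort.length = S.card := by simp [dists]
  rw [Multiset.sumSmallest, Multiset.sort_add_replicate hle, Ik]
  split_ifs with hk
  · rw [List.take_append_of_le_length (hlen ▸ hk)]
    rfl
  · rw [List.take_append, List.take_of_length_le (by omega), List.take_replicate, List.sum_append,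
      List.sum_replicate, smul_eq_mul, ← Multiset.sum_coe, Multiset.sort_eq, hlen,
      min_eq_left (by omega)]
    rfl

theorem Ik_le_of_subset (hST : S ⊆ T) (hT : ∀ e ∈ T, tdist j e ≤ m) :
    Ik m k T j ≤ Ik m k S j := by
  rw [Ik_eq_sumSmallest hT, Ik_eq_sumSmallest fun e he => hT e (hST he)]
  exact Multiset.sumSmallest_le_of_le (add_le_add_left (dists_mono hST) _) (by simp)

theorem Ik_add_Ik_le (h : ∀ e ∈ X ∪ Y, tdist j e ≤ m) :
    Ik m k X j + Ik m k Y j ≤ Ik m k (X ∩ Y) j + Ik m k (X ∪ Y) j := by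
  have hX : dists j X = dists j (X ∩ Y) + dists j (X \ Y) := by
    rw [add_comm, ← dists_union_of_disjoint (Finset.disjoint_sdiff_inter X Y),
      Finset.sdiff_union_inter]
  have hU : dists j (X ∪ Y) = dists j Y + dists j (X \ Y) := by
    rw [add_comm, ← dists_union_of_disjoint Finset.sdiff_disjoint,
      Finset.sdiff_union_self_eq_union]
  have hsub : dists j (X ∩ Y) + Multiset.replicate k m ≤ dists j Y + Multiset.replicate k m :=
    add_le_add_left (dists_mono Finset.inter_subset_right) _
  have key :=
    Multiset.sumSmallest_add_sumSmallest_add_le (k := k) hsub (by simp) (dists j (X \ Y))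
  rw [Ik_eq_sumSmallest fun e he => h e (Finset.mem_union_left Y he),
    Ik_eq_sumSmallest fun e he => h e (Finset.mem_union_right X he),
    Ik_eq_sumSmallest fun e he => h e (Finset.inter_subset_union he), Ik_eq_sumSmallest h,
    hX, hU, add_right_comm (dists j (X ∩ Y)), add_right_comm (dists j Y)]
  exact (add_comm _ _).trans_le key

theorem rho_of_mem (h : j ∈ S) : rho m k S j = 0 := if_pos h

theorem rho_of_notMem (h : j ∉ S) : rho m k S j = Ik m k S j / (k * m) := if_neg h

theorem rho_le_of_subset (hST : S ⊆ T) (hT : ∀ e ∈ T, tdist j e ≤ m) :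
    rho m k T j ≤ rho m k S j := by
  by_cases hjT : j ∈ T
  · rw [rho_of_mem hjT, rho]
    split_ifs <;> positivity
  · rw [rho_of_notMem hjT, rho_of_notMem fun hjS => hjT (hST hjS)]
    gcongr
    exact_mod_cast Ik_le_of_subset hST hT

theorem rho_add_rho_le (h : ∀ e ∈ X ∪ Y, tdist j e ≤ m) :
    rho m k X j + rho m k Y j ≤ rho m k (X ∩ Y) j + rho m k (X ∪ Y) j := by
  by_cases hx : j ∈ X <;> by_cases hy : j ∈ Y
  · rw [rho_of_mem hx, rho_of_mem hy, rho_of_mem (Finset.mem_inter.2 ⟨hx, hy⟩),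
      rho_of_mem (Finset.mem_union_left Y hx)]
  · rw [rho_of_mem hx, rho_of_mem (Finset.mem_union_left Y hx), zero_add, add_zero]
    exact rho_le_of_subset Finset.inter_subset_right fun e he => h e (Finset.mem_union_right X he)
  · rw [rho_of_mem hy, rho_of_mem (Finset.mem_union_right X hy), add_zero, add_zero]
    exact rho_le_of_subset Finset.inter_subset_left fun e he => h e (Finset.mem_union_left Y he)
  · have hi : j ∉ X ∩ Y := fun hj => hx (Finset.mem_inter.1 hj).1
    have hu : j ∉ X ∪ Y := by simp [hx, hy]
    rw [rho_of_notMem hx, rho_of_notMem hy, rho_of_notMem hi, rho_of_notMem hu, ← add_div,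
      ← add_div]
    exact div_le_div_of_nonneg_right (by exact_mod_cast Ik_add_Ik_le h) (by positivity)

end Slots

theorem prob_submodular_general (m k : ℕ)
    (j : ℕ) (hj : j ∈ Finset.Icc 1 m)
    (X Y : Finset ℕ) (hX : X ⊆ Finset.Icc 1 m) (hY : Y ⊆ Finset.Icc 1 m) :
    prob m k (X ∩ Y) j + prob m k (X ∪ Y) j ≤ prob m k X j + prob m k Y j := by
  have hdist : ∀ e ∈ X ∪ Y, tdist j e ≤ m := fun e he =>
    tdist_le_of_le (Finset.mem_Icc.1 hj).2 (Finset.mem_Icc.1 (Finset.union_subset hX hY he)).2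
  have hrho := rho_add_rho_le (k := k) hdist
  simp only [prob]
  linear_combination (1 / (m : ℝ)) * hrho

/-- For every slot `j`, the finishing probability `S ↦ p^S(j)` is submodular. -/
theorem prob_submodular (m k : ℕ) (hm : 2 ≤ m) (hk : 1 ≤ k)
    (j : ℕ) (hj : j ∈ Finset.Icc 1 m)
    (X Y : Finset ℕ) (hX : X ⊆ Finset.Icc 1 m) (hY : Y ⊆ Finset.Icc 1 m) :
    prob m k (X ∩ Y) j + prob m k (X ∪ Y) j ≤ prob m k X j + prob m k Y j :=
  prob_submodular_general m k j hj X Y hX hY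
end

section
/- Budgeted greedy approximation guarantee: let V be a finite set, let f be a real-valued non-decreasing submodular function on finite subsets of V with f(∅) = 0, let c : V → ℝ be a positive cost function, and let b ≥ 0 be a budget. Suppose v₁, …, v_T is a cost-benefit greedy sequence: the v_t are distinct, and for each t, writing G_{t−1} = {v₁, …, v_{t−1}}, we have c(G_{t−1}) + c(v_t) ≤ b and (f(G_{t−1} ∪ {v_t}) − f(G_{t−1}))/c(v_t) ≥ (f(G_{t−1} ∪ {u}) − f(G_{t−1}))/c(u) for every u ∉ G_{t−1} with c(G_{t−1}) + c(u) ≤ b; and suppose the sequence is maximal, i.e. there is no u ∉ G_T with c(G_T) + c(u) ≤ b. Then max( f(G_T), max{ f({v}) : v ∈ V, c(v) ≤ b } ) ≥ (1 − 1/√e) · max{ f(A) : A ⊆ V, c(A) ≤ b }, where c(A) := ∑_{v ∈ A} c(v). -/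
/-!
Every greedy step shrinks the gap `f S - f G` by the factor `1 - c w / c S` for each set `S` all of
whose elements are still affordable, so the gap decays like `exp (-(cost spent) / c S)`.
Let `t` be the first step at which some `a ∈ A` is no longer affordable and `γ` the cost spent by
then. If `γ ≥ b / 2`, the decay alone gives the factor `1 - e^{-1/2}`. Otherwise `c a > b / 2`;
unless `{a}` is good enough, `f A ≤ f (A.erase a) + f {a}`, and the same decay argument for
`A.erase a`, whose cost is below `γ`, run from step `t` on, finishes the proof. The two phases
combine through `exp (2 - 1 / p) * (exp (-p) - α) ≤ 1 - 2 α` for `0 < p ≤ 1 / 2`, where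
`α = 1 - e^{-1/2}` and `p = γ / b`.
-/

open Finset Real

def marginalGain {V : Type*} [DecidableEq V] (f : Finset V → ℝ) (G : Finset V) (a : V) : ℝ :=
  f (insert a G) - f G

def Affordable {V : Type*} (c : V → ℝ) (b : ℝ) (G : Finset V) (a : V) : Prop :=
  ∑ v ∈ G, c v + c a ≤ b

section Submodular

variable {V : Type*} [DecidableEq V] {f : Finset V → ℝ} (f_mono : Monotone f)
  (f_submod : ∀ X Y : Finset V, f (X ∩ Y) + f (X ∪ Y) ≤ f X + f Y)
include f_submod

theorem union_le_add_sum_marginalGain (G S : Finset V) :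
    f (G ∪ S) ≤ f G + ∑ a ∈ S, marginalGain f G a := by
  induction S using Finset.induction_on with
  | empty => simp
  | insert a S ha ih =>
    have h := f_submod (G ∪ S) (insert a G)
    have hinter : (G ∪ S) ∩ insert a G = G := by
      ext x; simp only [mem_inter, mem_union, mem_insert]; grind
    have hunion : G ∪ S ∪ insert a G = G ∪ insert a S := by
      ext x; simp only [mem_union, mem_insert]; tauto
    rw [hinter, hunion] at h
    rw [sum_insert ha, marginalGain]
    linarith

include f_mono

theorem sub_le_sum_marginalGain (G S : Finset V) :
    f S - f G ≤ ∑ a ∈ S, marginalGain f G a := by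
  have := f_mono (subset_union_right : S ⊆ G ∪ S)
  linarith [union_le_add_sum_marginalGain f_submod G S]

theorem le_add_singleton_of_erase_subset (hf_empty : 0 ≤ f ∅) {A G : Finset V} {a : V}
    (h : A.erase a ⊆ G) : f A ≤ f G + f {a} := by
  have hA : A ⊆ G ∪ {a} := fun x hx => by
    by_cases hxa : x = a
    · simp [hxa]
    · exact mem_union_left _ (h (mem_erase.2 ⟨hxa, hx⟩))
  have := hf_empty.trans (f_mono (empty_subset (G ∩ {a})))
  linarith [f_mono hA, f_submod G {a}]

end Submodular

section GreedyStep

variable {V : Type*} [DecidableEq V] {f : Finset V → ℝ}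
  (f_mono : Monotone f) (f_submod : ∀ X Y : Finset V, f (X ∩ Y) + f (X ∪ Y) ≤ f X + f Y)
  {c : V → ℝ} (hc : ∀ v, 0 < c v) {G S : Finset V} (hS : S.Nonempty) {w : V}
  (hw : ∀ a ∈ S, a ∉ G → marginalGain f G a / c a ≤ marginalGain f G w / c w)
include f_mono f_submod hc hS hw

theorem sub_insert_le_one_sub_mul :
    f S - f (insert w G) ≤ (1 - c w / ∑ v ∈ S, c v) * (f S - f G) := by
  set R := marginalGain f G w / c w
  have hR : 0 ≤ R := div_nonneg (sub_nonneg.2 (f_mono (subset_insert w G))) (hc w).le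
  have hgain : ∀ a ∈ S, marginalGain f G a ≤ c a * R := fun a ha => by
    by_cases haG : a ∈ G
    · simp [marginalGain, insert_eq_of_mem haG, mul_nonneg (hc a).le hR]
    · rw [← div_le_iff₀' (hc a)]; exact hw a ha haG
  have hS_cost : 0 < ∑ v ∈ S, c v := sum_pos (fun v _ => hc v) hS
  have hbound : f S - f G ≤ (∑ v ∈ S, c v) * R := calc
    f S - f G ≤ ∑ a ∈ S, marginalGain f G a := sub_le_sum_marginalGain f_mono f_submod G S
    _ ≤ ∑ a ∈ S, c a * R := sum_le_sum hgain
    _ = (∑ v ∈ S, c v) * R := (sum_mul ..).symm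
  have hw_gain : f (insert w G) - f G = c w * R := by
    rw [mul_div_cancel₀ _ (hc w).ne']; rfl
  have hshare : c w / (∑ v ∈ S, c v) * (f S - f G) ≤ c w * R := by
    rw [div_mul_eq_mul_div, div_le_iff₀ hS_cost]
    nlinarith [mul_le_mul_of_nonneg_left hbound (hc w).le]
  linarith [sub_one_mul (c w / ∑ v ∈ S, c v) (f S - f G)]

theorem max_sub_insert_le_exp_mul :
    max (f S - f (insert w G)) 0 ≤ exp (-(c w / ∑ v ∈ S, c v)) * max (f S - f G) 0 := by
  rcases le_or_gt (f S - f (insert w G)) 0 with hle | hpos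
  · rw [max_eq_right hle]; positivity
  have hG : 0 ≤ f S - f G := by linarith [f_mono (subset_insert w G)]
  rw [max_eq_left hpos.le, max_eq_left hG]
  calc f S - f (insert w G) ≤ (1 - c w / ∑ v ∈ S, c v) * (f S - f G) :=
        sub_insert_le_one_sub_mul f_mono f_submod hc hS hw
    _ ≤ exp (-(c w / ∑ v ∈ S, c v)) * (f S - f G) := by
        gcongr; linarith [add_one_le_exp (-(c w / ∑ v ∈ S, c v))]

end GreedyStep

theorem one_sub_exp_neg_half_le : 1 - exp (-(1 / 2)) ≤ 3 / 4 * exp (-(1 / 2)) := by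
  have hsq : exp (1 / 2) * exp (1 / 2) = exp 1 := by rw [← exp_add]; norm_num
  have hinv : exp (-(1 / 2)) * exp (1 / 2) = 1 := by rw [← exp_add]; norm_num
  nlinarith [exp_one_lt_d9, exp_pos (1 / 2), exp_pos (-(1 / 2))]

theorem exp_two_sub_inv_mul_le {p : ℝ} (hp0 : 0 < p) (hp : p ≤ 1 / 2) :
    exp (2 - 1 / p) * (exp (-p) - (1 - exp (-(1 / 2)))) ≤ 1 - 2 * (1 - exp (-(1 / 2))) := by
  set q := 1 / p - 2 with hq_def
  have hq : 0 ≤ q := by rw [hq_def, le_sub_iff_add_le, le_div_iff₀ hp0]; linarith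
  have hexp_q : exp (2 - 1 / p) = exp (-q) := by rw [hq_def]; ring_nf
  -- the exponents compare by `p + q / 4 ≥ 1 / 2`, which is AM-GM for `p` and `1 / (4 p)`
  have hpq : exp (-q) * exp (-p) ≤ exp (-(1 / 2)) * exp (-(3 / 4 * q)) := by
    rw [← exp_add, ← exp_add, exp_le_exp, hq_def]
    have hamgm : 1 ≤ p + 1 / p / 4 := by
      have : p + 1 / p / 4 - 1 = (2 * p - 1) ^ 2 / (4 * p) := by field_simp; ring
      linarith [show 0 ≤ (2 * p - 1) ^ 2 / (4 * p) by positivity]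
    linarith
  have hconv : exp (-(3 / 4 * q)) ≤ 3 / 4 * exp (-q) + 1 / 4 := by
    have := convexOn_exp.2 (Set.mem_univ (-q)) (Set.mem_univ 0) (by norm_num : (0 : ℝ) ≤ 3 / 4)
      (by norm_num : (0 : ℝ) ≤ 1 / 4) (by norm_num)
    simpa [smul_eq_mul] using this
  have hq1 : exp (-q) ≤ 1 := exp_le_one_iff.2 (by linarith)
  rw [hexp_q]
  nlinarith [mul_le_mul_of_nonneg_right one_sub_exp_neg_half_le (sub_nonneg.2 hq1),
    exp_pos (-(1 / 2)),
    mul_le_mul_of_nonneg_left hconv (exp_pos (-(1 / 2))).le]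

/-- `G k` is the greedy solution after `k` of the `T` steps of a maximal cost-benefit greedy run. -/
structure IsGreedyRun {V : Type*} [DecidableEq V] (f : Finset V → ℝ) (c : V → ℝ) (b : ℝ)
    (G : ℕ → Finset V) (T : ℕ) : Prop where
  zero : G 0 = ∅
  step : ∀ k < T, ∃ w ∉ G k, G (k + 1) = insert w (G k) ∧
    ∀ u ∉ G k, Affordable c b (G k) u →
      marginalGain f (G k) u / c u ≤ marginalGain f (G k) w / c w
  maximal : ∀ u ∉ G T, ¬ Affordable c b (G T) u

namespace IsGreedyRun

variable {V : Type*} [DecidableEq V] {f : Finset V → ℝ} {c : V → ℝ} {b : ℝ}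
  {G : ℕ → Finset V} {T : ℕ}

theorem mono (hrun : IsGreedyRun f c b G T) {i j : ℕ} (hij : i ≤ j) (hjT : j ≤ T) :
    G i ⊆ G j := by
  induction j, hij using Nat.le_induction with
  | base => rfl
  | succ j hij ih =>
    obtain ⟨w, -, hGw, -⟩ := hrun.step j (by omega)
    exact (ih (by omega)).trans (hGw ▸ subset_insert w (G j))

theorem subset_or_exists_not_affordable (hrun : IsGreedyRun f c b G T) (S : Finset V) {i : ℕ}
    (hiT : i ≤ T) :
    S ⊆ G T ∨ ∃ j, i ≤ j ∧ j ≤ T ∧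
      (∀ k, i ≤ k → k < j → ∀ a ∈ S, a ∉ G k → Affordable c b (G k) a) ∧
      ∃ a ∈ S, a ∉ G j ∧ ¬ Affordable c b (G j) a := by
  classical
  by_cases h : ∃ j, i ≤ j ∧ j ≤ T ∧ ∃ a ∈ S, a ∉ G j ∧ ¬ Affordable c b (G j) a
  · obtain ⟨hij, hjT, hblocked⟩ := Nat.find_spec h
    refine Or.inr ⟨Nat.find h, hij, hjT, fun k hik hk a ha haG => ?_, hblocked⟩
    by_contra hna
    exact Nat.find_min h hk ⟨hik, by omega, a, ha, haG, hna⟩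
  · push Not at h
    left
    intro a ha
    by_contra haG
    exact hrun.maximal a haG (h T hiT le_rfl a ha haG)

variable (f_mono : Monotone f)
  (f_submod : ∀ X Y : Finset V, f (X ∩ Y) + f (X ∪ Y) ≤ f X + f Y) (hc : ∀ v, 0 < c v)
include f_mono f_submod hc

theorem max_sub_le_exp_mul (hrun : IsGreedyRun f c b G T) {S : Finset V} (hS : S.Nonempty)
    {i j : ℕ} (hij : i ≤ j) (hjT : j ≤ T)
    (hfits : ∀ k, i ≤ k → k < j → ∀ a ∈ S, a ∉ G k → Affordable c b (G k) a) :
    max (f S - f (G j)) 0 ≤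
      exp (-((∑ v ∈ G j, c v - ∑ v ∈ G i, c v) / ∑ v ∈ S, c v)) *
        max (f S - f (G i)) 0 := by
  induction j, hij using Nat.le_induction with
  | base => simp
  | succ j hij ih =>
    obtain ⟨w, hwG, hGw, hbest⟩ := hrun.step j (by omega)
    have hstep := max_sub_insert_le_exp_mul f_mono f_submod hc hS
      (fun a ha haG => hbest a haG (hfits j hij (by omega) a ha haG))
    have ih := ih (by omega) (fun k hik hk => hfits k hik (by omega))
    rw [hGw, sum_insert hwG]
    calc max (f S - f (insert w (G j))) 0
        ≤ exp (-(c w / ∑ v ∈ S, c v)) * max (f S - f (G j)) 0 := hstep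
      _ ≤ exp (-(c w / ∑ v ∈ S, c v)) *
          (exp (-((∑ v ∈ G j, c v - ∑ v ∈ G i, c v) / ∑ v ∈ S, c v)) *
            max (f S - f (G i)) 0) := by gcongr
      _ = _ := by rw [← mul_assoc, ← exp_add]; congr 2; ring

theorem sub_le_exp_mul_of_cost_le (hrun : IsGreedyRun f c b G T) {t : ℕ} (htT : t ≤ T)
    {S : Finset V} (hS : ∑ v ∈ S, c v ≤ ∑ v ∈ G t, c v) (hb : ∑ v ∈ G t, c v ≤ b) :
    f S - f (G T) ≤ exp (2 - b / ∑ v ∈ G t, c v) * max (f S - f (G t)) 0 := by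
  rcases hrun.subset_or_exists_not_affordable S htT with
    hST | ⟨j, htj, hjT, hfits, a, haS, -, hna⟩
  · have : 0 ≤ exp (2 - b / ∑ v ∈ G t, c v) * max (f S - f (G t)) 0 := by positivity
    linarith [f_mono hST]
  have hchain := hrun.max_sub_le_exp_mul f_mono f_submod hc ⟨a, haS⟩ htj hjT hfits
  set γ := ∑ v ∈ G t, c v
  set C := ∑ v ∈ S, c v
  have hC : 0 < C := sum_pos (fun v _ => hc v) ⟨a, haS⟩
  have hca : c a ≤ C := single_le_sum (fun v _ => (hc v).le) haS
  have hblocked : b < ∑ v ∈ G j, c v + c a := not_le.1 hna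
  have hexponent : b / γ - 2 ≤ (∑ v ∈ G j, c v - γ) / C := by
    have hγ : 0 < γ := hC.trans_le hS
    have : (b - γ) / γ ≤ (b - γ) / C := div_le_div_of_nonneg_left (by linarith) hC hS
    calc b / γ - 2 = (b - γ) / γ - 1 := by field_simp; ring
      _ ≤ (b - γ) / C - 1 := by linarith
      _ = (b - γ - C) / C := by field_simp
      _ ≤ (∑ v ∈ G j, c v - γ) / C := div_le_div_of_nonneg_right (by linarith) hC.le
  calc f S - f (G T) ≤ max (f S - f (G j)) 0 := le_max_of_le_left
        (by linarith [f_mono (hrun.mono hjT le_rfl)])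
    _ ≤ _ := hchain
    _ ≤ _ := by gcongr; linarith

variable (f_empty : f ∅ = 0)
include f_empty

theorem sub_le_exp_mul_of_affordable (hrun : IsGreedyRun f c b G T) {A : Finset V}
    (hA : ∑ v ∈ A, c v ≤ b) (hA_ne : A.Nonempty) {t : ℕ} (htT : t ≤ T)
    (hfits : ∀ k < t, ∀ a ∈ A, a ∉ G k → Affordable c b (G k) a) :
    f A - f (G t) ≤ exp (-((∑ v ∈ G t, c v) / b)) * f A := by
  have hchain := hrun.max_sub_le_exp_mul f_mono f_submod hc hA_ne (Nat.zero_le t) htT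
    fun k _ => hfits k
  have hfA : 0 ≤ f A := f_empty ▸ f_mono (empty_subset A)
  rw [hrun.zero, sum_empty, sub_zero, f_empty, sub_zero, max_eq_left hfA] at hchain
  have hA_pos : 0 < ∑ v ∈ A, c v := sum_pos (fun v _ => hc v) hA_ne
  calc f A - f (G t) ≤ _ := le_max_left _ 0
    _ ≤ _ := hchain
    _ ≤ _ := by
      gcongr
      exact sum_nonneg fun v _ => (hc v).le

theorem approx_guarantee (hrun : IsGreedyRun f c b G T) {A : Finset V}
    (hA : ∑ v ∈ A, c v ≤ b) :
    (1 - exp (-(1 / 2))) * f A ≤ f (G T) ∨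
      ∃ v, c v ≤ b ∧ (1 - exp (-(1 / 2))) * f A ≤ f {v} := by
  set α := 1 - exp (-(1 / 2))
  have hα : α ≤ 1 / 2 := by linarith [one_sub_exp_neg_half_le]
  have hfA : 0 ≤ f A := f_empty ▸ f_mono (empty_subset A)
  rcases hrun.subset_or_exists_not_affordable A (Nat.zero_le T) with
    hAG | ⟨t, -, htT, hfits, a, haA, -, hna⟩
  · exact Or.inl (by nlinarith [f_mono hAG])
  have hca : c a ≤ b := (single_le_sum (fun v _ => (hc v).le) haA).trans hA
  have hfirst := hrun.sub_le_exp_mul_of_affordable f_mono f_submod hc f_empty hA ⟨a, haA⟩ htT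
    fun k => hfits k k.zero_le
  have hGT : f (G t) ≤ f (G T) := f_mono (hrun.mono htT le_rfl)
  set γ := ∑ v ∈ G t, c v
  have hb : 0 < b := (hc a).trans_le hca
  by_cases hhalf : b ≤ 2 * γ
  · have : exp (-(γ / b)) ≤ exp (-(1 / 2)) := by
      rw [exp_le_exp, neg_le_neg_iff, le_div_iff₀ hb]; linarith
    exact Or.inl (by nlinarith)
  by_cases hsingle : α * f A ≤ f {a}
  · exact Or.inr ⟨a, hca, hsingle⟩
  push Not at hhalf hsingle
  have hblocked : b < γ + c a := not_le.1 hna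
  have hγ : 0 < γ := by linarith
  have hsplit : f A ≤ f (A.erase a) + f {a} :=
    le_add_singleton_of_erase_subset f_mono f_submod f_empty.ge subset_rfl
  have hcost : ∑ v ∈ A.erase a, c v ≤ γ := by linarith [sum_erase_add A c haA]
  have hsecond := hrun.sub_le_exp_mul_of_cost_le f_mono f_submod hc htT hcost (by linarith)
  have hkey := exp_two_sub_inv_mul_le (div_pos hγ hb) (by rw [div_le_iff₀ hb]; linarith)
  rw [one_div_div] at hkey
  set E₁ := exp (-(γ / b))
  set E₂ := exp (2 - b / γ)
  have hE₂ : E₂ ≤ 1 := exp_le_one_iff.2 (by rw [sub_nonpos, le_div_iff₀ hγ]; linarith)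
  left
  rcases le_total (f (A.erase a)) (f (G t)) with hle | hlt
  · nlinarith
  · rw [max_eq_left (sub_nonneg.2 hlt)] at hsecond
    -- `f (G T) ≥ (1 - E₂) f (A.erase a) + E₂ f (G t)`
    -- `  ≥ ((1 - E₂) (1 - α) + E₂ (1 - E₁)) f A`, and `hkey` makes this coefficient `≥ α`
    nlinarith [mul_le_mul_of_nonneg_left hfirst (exp_pos (2 - b / γ)).le,
      mul_le_mul_of_nonneg_right hkey hfA, mul_le_mul_of_nonneg_left hsplit (sub_nonneg.2 hE₂),
      mul_le_mul_of_nonneg_left hsingle.le (sub_nonneg.2 hE₂)]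

end IsGreedyRun

theorem isGreedyRun_take {V : Type*} [DecidableEq V] {f : Finset V → ℝ} {c : V → ℝ}
    {b : ℝ} {g : List V} (hnodup : g.Nodup)
    (hgreedy : ∀ t : Fin g.length, ∀ u ∉ (g.take t).toFinset,
      Affordable c b (g.take t).toFinset u →
        marginalGain f (g.take t).toFinset u / c u ≤
          marginalGain f (g.take t).toFinset (g.get t) / c (g.get t))
    (hmaximal : ∀ u ∉ g.toFinset, b < ∑ v ∈ g.toFinset, c v + c u) :
    IsGreedyRun f c b (fun k => (g.take k).toFinset) g.length where
  zero := by simp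
  step k hk := by
    have htake : g.take (k + 1) = g.take k ++ [g[k]] := (List.take_append_getElem hk).symm
    have hnd : (g.take k ++ [g[k]]).Nodup := htake ▸ (List.take_sublist _ _).nodup hnodup
    refine ⟨g[k], ?_, ?_, hgreedy ⟨k, hk⟩⟩
    · exact fun h => (List.nodup_append.1 hnd).2.2 _ (List.mem_toFinset.1 h) _
        (List.mem_singleton_self _) rfl
    · ext x
      simp only [htake, List.mem_toFinset, List.mem_append, List.mem_singleton, mem_insert]
      exact or_comm
  maximal u hu := by
    rw [List.take_length] at hu ⊢
    exact (hmaximal u hu).not_ge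

theorem one_div_sqrt_exp_one : 1 / √(exp 1) = exp (-(1 / 2)) := by
  rw [← exp_half, exp_neg, one_div]

theorem budgeted_greedy_guarantee_general {V : Type*} [DecidableEq V]
    (f : Finset V → ℝ)
    (f_mono : ∀ X Y : Finset V, X ⊆ Y → f X ≤ f Y)
    (f_submod : ∀ X Y : Finset V, f (X ∩ Y) + f (X ∪ Y) ≤ f X + f Y)
    (f_empty : f ∅ = 0)
    (c : V → ℝ) (hc : ∀ v, 0 < c v)
    (b : ℝ)
    (g : List V) (hnodup : g.Nodup)
    (hgreedy : ∀ t : Fin g.length,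
      (∑ v ∈ (g.take t).toFinset, c v) + c (g.get t) ≤ b ∧
      ∀ u : V, u ∉ (g.take t).toFinset →
        (∑ v ∈ (g.take t).toFinset, c v) + c u ≤ b →
        (f (insert u (g.take t).toFinset) - f (g.take t).toFinset) / c u ≤
          (f (insert (g.get t) (g.take t).toFinset) - f (g.take t).toFinset) /
            c (g.get t))
    (hmaximal : ∀ u : V, u ∉ g.toFinset →
      b < (∑ v ∈ g.toFinset, c v) + c u) :
    ∀ A : Finset V, (∑ v ∈ A, c v) ≤ b →
      (1 - 1 / Real.sqrt (Real.exp 1)) * f A ≤ f g.toFinset ∨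
      ∃ v : V, c v ≤ b ∧ (1 - 1 / Real.sqrt (Real.exp 1)) * f A ≤ f {v} := by
  intro A hA
  have hrun := isGreedyRun_take (f := f) hnodup (fun t => (hgreedy t).2) hmaximal
  rw [one_div_sqrt_exp_one]
  simpa using hrun.approx_guarantee f_mono f_submod hc f_empty hA

/-- Budgeted greedy approximation guarantee: if `g = [v₁, …, v_T]` is a
maximal cost-benefit greedy sequence for a non-decreasing submodular function
`f` with `f ∅ = 0`, positive costs `c` and budget `b`, then the better of the
greedy solution and the best feasible singleton achieves at least a
`(1 − 1/√e)` fraction of the optimum, i.e. for every feasible set `A`,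
`(1 − 1/√e) · f A ≤ max (f G_T) (max {f {v} : c v ≤ b})`. -/
theorem budgeted_greedy_guarantee {V : Type*} [Fintype V] [DecidableEq V]
    (f : Finset V → ℝ)
    (f_mono : ∀ X Y : Finset V, X ⊆ Y → f X ≤ f Y)
    (f_submod : ∀ X Y : Finset V, f (X ∩ Y) + f (X ∪ Y) ≤ f X + f Y)
    (f_empty : f ∅ = 0)
    (c : V → ℝ) (hc : ∀ v, 0 < c v)
    (b : ℝ) (hb : 0 ≤ b)
    (g : List V) (hnodup : g.Nodup)
    (hgreedy : ∀ t : Fin g.length,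
      (∑ v ∈ (g.take t).toFinset, c v) + c (g.get t) ≤ b ∧
      ∀ u : V, u ∉ (g.take t).toFinset →
        (∑ v ∈ (g.take t).toFinset, c v) + c u ≤ b →
        (f (insert u (g.take t).toFinset) - f (g.take t).toFinset) / c u ≤
          (f (insert (g.get t) (g.take t).toFinset) - f (g.take t).toFinset) /
            c (g.get t))
    (hmaximal : ∀ u : V, u ∉ g.toFinset →
      b < (∑ v ∈ g.toFinset, c v) + c u) :
    ∀ A : Finset V, (∑ v ∈ A, c v) ≤ b →
      (1 - 1 / Real.sqrt (Real.exp 1)) * f A ≤ f g.toFinset ∨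
      ∃ v : V, c v ≤ b ∧ (1 - 1 / Real.sqrt (Real.exp 1)) * f A ≤ f {v} :=
  budgeted_greedy_guarantee_general f f_mono f_submod f_empty c hc b g hnodup hgreedy hmaximal
end
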